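/- arXiv:2108.12633 — 11 statements merged into one kernel-verified Lean document; each statement's English description precedes it below -/
import Mathlib

section
/- Suppose S is a finite set and Π(t) ⊆ Δ(S) is convex with nonempty relative interior for each t ∈ T, and suppose the correspondence t ↦ rint Π(t) has a relatively open graph in T × Δ(S). Then beliefs {Π(t) : t ∈ T} are fully overlapping: for each t₀ ∈ T there is a neighborhood N(t₀) such that ⋂_{t ∈ N(t₀)} Π(t) has full dimension. -/
open Set

/-- A set of probability vectors on a finite state space has full dimension if the only
function with zero expectation under every element of the set is the zero function. -/
def FullDimFin {S : Type*} [Fintype S] (P : Set (S → ℝ)) : Prop :=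
  ∀ g : S → ℝ, (∀ π ∈ P, ∑ s, g s * π s = 0) → g = 0

theorem stmt_2
    {T : Type*} [MetricSpace T] {S : Type*} [Fintype S]
    (B : T → Set (S → ℝ))
    (hBsub : ∀ t, B t ⊆ stdSimplex ℝ S)
    (hconv : ∀ t, Convex ℝ (B t))
    (hrint : ∀ t, (intrinsicInterior ℝ (B t)).Nonempty)
    (hopen : ∀ t : T, ∀ π ∈ intrinsicInterior ℝ (B t),
      ∃ ε > 0, ∃ U : Set (S → ℝ), IsOpen U ∧ π ∈ U ∧
        ∀ t' ∈ Metric.ball t ε, ∀ π' ∈ U ∩ stdSimplex ℝ S,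
          π' ∈ intrinsicInterior ℝ (B t')) :
    ∀ t₀ : T, ∃ ε > 0, FullDimFin (⋂ t ∈ Metric.ball t₀ ε, B t) := by
  intro t₀
  classical
  obtain ⟨π, hπ⟩ := hrint t₀
  have hπB : π ∈ B t₀ := intrinsicInterior_subset hπ
  have hπS : π ∈ stdSimplex ℝ S := hBsub t₀ hπB
  obtain ⟨ε, hε, U, hUopen, hπU, hkey⟩ := hopen t₀ π hπ
  refine ⟨ε, hε, ?_⟩
  -- any point of U ∩ stdSimplex lies in the intersection
  have hmem : ∀ q ∈ U ∩ stdSimplex ℝ S, q ∈ ⋂ t ∈ Metric.ball t₀ ε, B t := by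
    intro q hq
    rw [mem_iInter₂]
    intro t ht
    exact intrinsicInterior_subset (hkey t ht q hq)
  intro g hg
  have hgπ : ∑ s, g s * π s = 0 := hg π (hmem π ⟨hπU, hπS⟩)
  funext s
  -- the vertex e_s of the simplex
  set σ : S → ℝ := fun s' => if s' = s then (1 : ℝ) else 0 with hσdef
  have hσS : σ ∈ stdSimplex ℝ S := by
    constructor
    · intro x
      by_cases h : x = s <;> simp [hσdef, h]
    · simp [hσdef]
  -- move slightly from π towards σ, staying in U
  have hcont : Continuous (fun δ : ℝ => (1 - δ) • π + δ • σ) :=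
    ((continuous_const.sub continuous_id).smul continuous_const).add
      (continuous_id.smul continuous_const)
  have h0 : (fun δ : ℝ => (1 - δ) • π + δ • σ) 0 ∈ U := by simpa using hπU
  have hpre : IsOpen ((fun δ : ℝ => (1 - δ) • π + δ • σ) ⁻¹' U) :=
    hUopen.preimage hcont
  obtain ⟨r, hr, hball⟩ := Metric.isOpen_iff.mp hpre 0 h0
  set δ : ℝ := min (r / 2) (1 / 2) with hδdef
  have hδpos : 0 < δ := lt_min (by linarith) (by norm_num)
  have hδlt : δ < r := lt_of_le_of_lt (min_le_left _ _) (by linarith)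
  have hδle1 : δ ≤ 1 := le_trans (min_le_right _ _) (by norm_num)
  have hδU : (1 - δ) • π + δ • σ ∈ U := by
    apply hball
    simp [Metric.mem_ball, Real.dist_eq, abs_of_pos hδpos, hδlt]
  have hδS : (1 - δ) • π + δ • σ ∈ stdSimplex ℝ S :=
    (convex_stdSimplex ℝ S) hπS hσS (by linarith) (le_of_lt hδpos) (by ring)
  have hgp : ∑ s', g s' * ((1 - δ) • π + δ • σ) s' = 0 :=
    hg _ (hmem _ ⟨hδU, hδS⟩)
  have hexpand : ∑ s', g s' * ((1 - δ) • π + δ • σ) s'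
      = (1 - δ) * (∑ s', g s' * π s') + δ * (∑ s', g s' * σ s') := by
    rw [Finset.mul_sum, Finset.mul_sum, ← Finset.sum_add_distrib]
    refine Finset.sum_congr rfl fun s' _ => ?_
    simp [Pi.add_apply, Pi.smul_apply, smul_eq_mul]
    ring
  have hσsum : ∑ s', g s' * σ s' = g s := by
    simp [hσdef, Finset.sum_ite_eq']
  rw [hexpand, hgπ, hσsum, mul_zero, zero_add] at hgp
  have : g s = 0 := by
    rcases mul_eq_zero.mp hgp with h | h
    · exact absurd h (ne_of_gt hδpos)
    · exact h
  simpa using this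
end

section
/- Let π : T → Δ(S) assign to each type a reference measure, with all π(t), π(t') mutually absolutely continuous, each Radon–Nikodym derivative dπ(t')/dπ(t) continuous in t, and the family {dπ(t')/dπ(t) : t ∈ T} equicontinuous. Then for every ε ∈ (0,1], if t is sufficiently close to t₀ so that dπ(t₀)/dπ(t)(s) ≥ (1−ε)/(1−ε/2) for all s ∈ S, the ε/2-contamination set of π(t₀) is contained in the ε-contamination set of π(t): Π_{ε/2}(t₀) ⊆ Π_ε(t). Consequently beliefs {Π_ε(t) : t ∈ T} are fully overlapping. -/
open MeasureTheory Set

/-- The `ε`-contamination set of a reference measure `π₀`. -/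
def contam {S : Type*} [MeasurableSpace S] (ε : ℝ) (π₀ : MeasureTheory.Measure S) :
    Set (MeasureTheory.Measure S) :=
  {ρ | ∃ π : MeasureTheory.Measure S, IsProbabilityMeasure π ∧
    ρ = ENNReal.ofReal (1 - ε) • π₀ + ENNReal.ofReal ε • π}

/-- A set of measures has full dimension if the only bounded Borel function with zero
expectation under every element of the set is the zero function. -/
def FullDim {S : Type*} [MeasurableSpace S] (P : Set (MeasureTheory.Measure S)) : Prop :=
  ∀ g : S → ℝ, Measurable g → (∃ M, ∀ s, |g s| ≤ M) →
    (∀ π ∈ P, ∫ s, g s ∂π = 0) → ∀ s, g s = 0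

lemma key_subset {S : Type*} [MeasurableSpace S] (μ₀ μ : Measure S)
    [IsProbabilityMeasure μ₀] [IsProbabilityMeasure μ] (hμ₀μ : μ₀ ≪ μ)
    (ε : ℝ) (hε0 : 0 < ε) (hε1 : ε ≤ 1)
    (h : ∀ᵐ s ∂μ, ENNReal.ofReal ((1 - ε) / (1 - ε / 2)) ≤ μ₀.rnDeriv μ s) :
    contam (ε/2) μ₀ ⊆ contam ε μ := by
  set r : ℝ := (1 - ε) / (1 - ε / 2) with hr
  have h2 : (0:ℝ) < 1 - ε/2 := by linarith
  have hr0 : 0 ≤ r := div_nonneg (by linarith) h2.le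
  have hr1 : r ≤ 1 := by
    rw [hr, div_le_one h2]; linarith
  set c : ENNReal := ENNReal.ofReal r with hcdef
  set ν : Measure S := μ.withDensity (fun s => μ₀.rnDeriv μ s - c) with hν
  have hsplit : μ₀ = ν + c • μ := by
    have h1 : (fun s => (μ₀.rnDeriv μ s - c) + c) =ᵐ[μ] μ₀.rnDeriv μ :=
      h.mono fun s hs => tsub_add_cancel_of_le hs
    calc μ₀ = μ.withDensity (μ₀.rnDeriv μ) := (Measure.withDensity_rnDeriv_eq _ _ hμ₀μ).symm
    _ = μ.withDensity (fun s => (μ₀.rnDeriv μ s - c) + c) := (withDensity_congr_ae h1).symm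
    _ = ν + c • μ := by
        rw [show (fun s => (μ₀.rnDeriv μ s - c) + c) =
          ((fun s => μ₀.rnDeriv μ s - c) + fun _ => c) from rfl,
          withDensity_add_right _ measurable_const, withDensity_const]
  have hc1 : ENNReal.ofReal (1-ε/2) * c = ENNReal.ofReal (1-ε) := by
    rw [hcdef, ← ENNReal.ofReal_mul (by linarith)]
    congr 1
    rw [hr, mul_comm, div_mul_cancel₀ _ h2.ne']
  have hν_univ : ν univ = 1 - c := by
    have h3 := congrArg (fun m : Measure S => m univ) hsplit
    simp only [Measure.add_apply, Measure.smul_apply, smul_eq_mul, measure_univ, mul_one] at h3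
    exact ENNReal.eq_sub_of_add_eq (by simp [hcdef]) h3.symm
  intro ρ hρ
  obtain ⟨pp, hpp, hρeq⟩ := hρ
  refine ⟨ENNReal.ofReal (1/ε) • (ENNReal.ofReal (1-ε/2) • ν + ENNReal.ofReal (ε/2) • pp), ?_, ?_⟩
  · constructor
    have hmid : (ENNReal.ofReal (1-ε/2) • ν + ENNReal.ofReal (ε/2) • pp) univ
        = ENNReal.ofReal ε := by
      have h1c : (1 : ENNReal) - c = ENNReal.ofReal (1 - r) := by
        rw [ENNReal.ofReal_sub 1 hr0, ENNReal.ofReal_one]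
      have : ENNReal.ofReal (1-ε/2) * (1 - c) = ENNReal.ofReal (ε/2) := by
        rw [h1c, ← ENNReal.ofReal_mul (by linarith)]
        congr 1
        have : (1 - ε/2) * (1 - r) = (1 - ε/2) - (1 - ε/2) * r := by ring
        rw [this, hr, mul_comm (1-ε/2), div_mul_cancel₀ _ h2.ne']
        ring
      simp only [Measure.add_apply, Measure.smul_apply, smul_eq_mul, measure_univ, mul_one,
        hν_univ, this]
      rw [← ENNReal.ofReal_add (by linarith) (by linarith)]
      norm_num
    simp only [Measure.smul_apply, smul_eq_mul, hmid]
    rw [← ENNReal.ofReal_mul (by positivity), one_div, inv_mul_cancel₀ hε0.ne',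
      ENNReal.ofReal_one]
  · have hεε : ENNReal.ofReal ε * ENNReal.ofReal (1/ε) = 1 := by
      rw [← ENNReal.ofReal_mul hε0.le, mul_one_div_cancel hε0.ne', ENNReal.ofReal_one]
    rw [hρeq, smul_smul, hεε, one_smul, hsplit, smul_add, smul_smul, hc1]
    abel

theorem stmt_4
    {S : Type*} [MeasurableSpace S] [MetricSpace S] [CompactSpace S] [BorelSpace S]
    (π : ℝ → Measure S) (hprob : ∀ t, IsProbabilityMeasure (π t))
    (hac : ∀ t t' : ℝ, π t ≪ π t' ∧ π t' ≪ π t)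
    (hcont : ∀ t' : ℝ, ∀ s : S,
      Continuous (fun t : ℝ => ((π t').rnDeriv (π t) s).toReal))
    (hequi : ∀ t' : ℝ,
      Equicontinuous (fun s : S => fun t : ℝ => ((π t').rnDeriv (π t) s).toReal))
    (ε : ℝ) (hε : ε ∈ Ioc (0:ℝ) 1) :
    (∀ t₀ t : ℝ,
      (∀ s : S, ENNReal.ofReal ((1 - ε) / (1 - ε / 2)) ≤ (π t₀).rnDeriv (π t) s) →
      contam (ε / 2) (π t₀) ⊆ contam ε (π t)) ∧
    (∀ t₀ ∈ Icc (0:ℝ) 1, ∃ δ > 0,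
      FullDim (⋂ t ∈ Metric.ball t₀ δ ∩ Icc (0:ℝ) 1, contam ε (π t))) := by
  obtain ⟨hε0, hε1⟩ := hε
  have h2 : (0:ℝ) < 1 - ε/2 := by linarith
  set r : ℝ := (1 - ε) / (1 - ε / 2) with hr
  have hr1 : r < 1 := by rw [hr, div_lt_one h2]; linarith
  constructor
  · intro t₀ t hpt
    haveI := hprob t₀; haveI := hprob t
    exact key_subset (π t₀) (π t) (hac t₀ t).1 ε hε0 hε1 (ae_of_all _ hpt)
  · intro t₀ ht₀
    obtain ⟨δ, hδ0, hδ⟩ := Metric.equicontinuousAt_iff.mp (hequi t₀ t₀) (1 - r)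
      (by linarith)
    refine ⟨δ, hδ0, ?_⟩
    -- for every t in the ball, contam (ε/2) (π t₀) ⊆ contam ε (π t)
    have hsub : ∀ t ∈ Metric.ball t₀ δ ∩ Icc (0:ℝ) 1,
        contam (ε/2) (π t₀) ⊆ contam ε (π t) := by
      intro t ht
      haveI := hprob t₀; haveI := hprob t
      refine key_subset (π t₀) (π t) (hac t₀ t).1 ε hε0 hε1 ?_
      have h1 : ∀ᵐ s ∂(π t₀), (π t₀).rnDeriv (π t₀) s = 1 := Measure.rnDeriv_self _
      have h2' : ∀ᵐ s ∂(π t), (π t₀).rnDeriv (π t₀) s = 1 := (hac t t₀).1.ae_le h1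
      filter_upwards [h2'] with s hs
      have h4 := hδ t (Metric.mem_ball.mp ht.1) s
      rw [hs] at h4
      simp only [ENNReal.toReal_one, Real.dist_eq] at h4
      have h5 : r ≤ ((π t₀).rnDeriv (π t) s).toReal := by
        have := abs_lt.mp h4
        linarith [this.1]
      calc ENNReal.ofReal r ≤ ENNReal.ofReal (((π t₀).rnDeriv (π t) s).toReal) :=
            ENNReal.ofReal_le_ofReal h5
        _ ≤ (π t₀).rnDeriv (π t) s := ENNReal.ofReal_toReal_le
    -- FullDim
    intro g hg hM hzero s₀
    obtain ⟨M, hM⟩ := hM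
    haveI := hprob t₀
    have hint : ∀ (μ' : Measure S), IsProbabilityMeasure μ' → Integrable g μ' := by
      intro μ' hμ'
      exact (integrable_const M).mono' hg.aestronglyMeasurable
        (ae_of_all _ fun s => by simpa [Real.norm_eq_abs] using hM s)
    have hmem : ∀ x : S,
        (ENNReal.ofReal (1 - ε/2) • π t₀ + ENNReal.ofReal (ε/2) • Measure.dirac x) ∈
          ⋂ t ∈ Metric.ball t₀ δ ∩ Icc (0:ℝ) 1, contam ε (π t) := by
      intro x
      rw [mem_iInter₂]
      intro t ht
      exact hsub t ht ⟨Measure.dirac x, by infer_instance, rfl⟩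
    have hcalc : ∀ x : S,
        ∫ s, g s ∂(ENNReal.ofReal (1 - ε/2) • π t₀ + ENNReal.ofReal (ε/2) • Measure.dirac x)
          = (1 - ε/2) * ∫ s, g s ∂(π t₀) + (ε/2) * g x := by
      intro x
      rw [integral_add_measure
        ((hint _ (hprob t₀)).smul_measure ENNReal.ofReal_ne_top)
        ((hint _ inferInstance).smul_measure ENNReal.ofReal_ne_top),
        integral_smul_measure, integral_smul_measure, integral_dirac,
        ENNReal.toReal_ofReal (by linarith), ENNReal.toReal_ofReal (by linarith)]
      simp [smul_eq_mul]
    have heq : ∀ x : S, (1 - ε/2) * ∫ s, g s ∂(π t₀) + (ε/2) * g x = 0 := by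
      intro x
      rw [← hcalc x]
      exact hzero _ (hmem x)
    have hxy : ∀ x y : S, g x = g y := by
      intro x y
      have h1 := heq x
      have h2 := heq y
      have h3 : (ε/2) * g x = (ε/2) * g y := by linarith
      exact mul_left_cancel₀ (by positivity) h3
    have hI : ∫ s, g s ∂(π t₀) = g s₀ := by
      have : g = fun _ => g s₀ := funext fun x => hxy x s₀
      rw [this, integral_const]
      simp
    have := heq s₀
    rw [hI] at this
    linarith
end

section
/- Suppose T = [0,1] and beliefs {Π(t) ⊆ Δ(S) : t ∈ T} are fully overlapping. Then any robust incentive compatible mechanism (q,p) satisfies the ex post envelope condition: for all t', t'' ∈ T and all s ∈ S, t''q(t'',s) − p(t'',s) − (t'q(t',s) − p(t',s)) = ∫_{t'}^{t''} q(t,s) dt. -/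
/-!
For a belief `π` shared by all types in an interval `[a, b]`, robust incentive compatibility
says that `m t = ∫ q t dπ` is a subgradient of the interim utility `W t = ∫ (t q t - p t) dπ`
on `[a, b]`. Hence `m` is monotone, `W` is differentiable with derivative
`m` off the countable set where `m` jumps, and `W b - W a = ∫ₐᵇ m`; by Fubini this says that the ex
post envelope defect `b q b s - p b s - (a q a s - p a s) - ∫ₐᵇ q t s dt` has zero mean under
every such `π`, so it vanishes identically when these beliefs have full dimension. Full overlap
gives this near every type, and connectedness of `[0, 1]` chains the local identities together.
-/

open MeasureTheory Set

open Filter Topology Interval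

def IsSubgradientOn (W m : ℝ → ℝ) (s : Set ℝ) : Prop :=
  ∀ x ∈ s, ∀ y ∈ s, m x * (y - x) ≤ W y - W x

namespace IsSubgradientOn

variable {W m : ℝ → ℝ} {s : Set ℝ}

theorem mono {t : Set ℝ} (h : IsSubgradientOn W m s) (hts : t ⊆ s) : IsSubgradientOn W m t :=
  fun x hx y hy => h x (hts hx) y (hts hy)

theorem monotoneOn (h : IsSubgradientOn W m s) : MonotoneOn m s := by
  intro x hx y hy hxy
  rcases hxy.eq_or_lt with rfl | hlt
  · rfl
  have := h x hx y hy
  have := h y hy x hx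
  nlinarith

theorem abs_sub_sub_le (h : IsSubgradientOn W m s) {x y : ℝ} (hx : x ∈ s) (hy : y ∈ s) :
    |W y - W x - (y - x) * m x| ≤ |m y - m x| * |y - x| := by
  have h₁ := h x hx y hy
  have h₂ := h y hy x hx
  rw [← abs_mul]
  exact abs_le_abs (by nlinarith) (by nlinarith)

theorem hasDerivAt (h : IsSubgradientOn W m s) {x : ℝ} (hs : s ∈ 𝓝 x)
    (hm : ContinuousAt m x) : HasDerivAt W (m x) x := by
  rw [hasDerivAt_iff_isLittleO]
  have hsmall : (fun y => (m y - m x) * (y - x)) =o[𝓝 x] fun y => y - x := by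
    simpa using ((Asymptotics.isLittleO_one_iff ℝ).2 (tendsto_sub_nhds_zero_iff.2 hm)).mul_isBigO
      (Asymptotics.isBigO_refl (fun y => y - x) (𝓝 x))
  refine Asymptotics.IsBigO.trans_isLittleO (.of_bound 1 ?_) hsmall
  filter_upwards [hs] with y hy
  simpa [abs_mul] using h.abs_sub_sub_le (mem_of_mem_nhds hs) hy

theorem lipschitzOnWith (h : IsSubgradientOn W m s) {C : ℝ} (hC : ∀ x ∈ s, |m x| ≤ C) :
    LipschitzOnWith (Real.toNNReal C) W s := by
  refine LipschitzOnWith.of_dist_le' fun x hx y hy => ?_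
  have h₁ := h x hx y hy
  have h₂ := h y hy x hx
  have hx' : |m x * (x - y)| ≤ C * |x - y| := by rw [abs_mul]; gcongr; exact hC x hx
  have hy' : |m y * (x - y)| ≤ C * |x - y| := by rw [abs_mul]; gcongr; exact hC y hy
  rw [Real.dist_eq, Real.dist_eq, abs_le]
  rw [abs_le] at hx' hy'
  constructor <;> nlinarith

theorem intervalIntegral_eq_sub {a b : ℝ} (h : IsSubgradientOn W m [[a, b]]) :
    ∫ t in a..b, m t = W b - W a := by
  have hmono := h.monotoneOn
  have hbound : ∀ x ∈ [[a, b]], |m x| ≤ max |m (a ⊓ b)| |m (a ⊔ b)| := fun x hx =>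
    abs_le_max_abs_abs (hmono ⟨le_rfl, inf_le_sup⟩ hx hx.1) (hmono hx ⟨inf_le_sup, le_rfl⟩ hx.2)
  refine integral_eq_of_hasDerivAt_off_countable W m hmono.countable_not_continuousWithinAt
    (h.lipschitzOnWith hbound).continuousOn (fun x hx => ?_) hmono.intervalIntegrable
  have hnhds : [[a, b]] ∈ 𝓝 x := Icc_mem_nhds hx.1.1 hx.1.2
  have hcont : ContinuousWithinAt m [[a, b]] x := by
    by_contra hc
    exact hx.2 ⟨Ioo_subset_Icc_self hx.1, hc⟩
  exact h.hasDerivAt hnhds (hcont.continuousAt hnhds)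

end IsSubgradientOn

section Bounded

variable {S : Type*} {f : ℝ → S → ℝ} {C : ℝ}

theorem measurable_intervalIntegral_of_measurable_uncurry [MeasurableSpace S]
    (hf : Measurable (Function.uncurry f)) (a b : ℝ) : Measurable fun s => ∫ t in a..b, f t s := by
  have hIoc (c d : ℝ) : Measurable fun s => ∫ t in Ioc c d, f t s :=
    ((hf.comp measurable_swap).stronglyMeasurable.integral_prod_right'
      (ν := volume.restrict (Ioc c d))).measurable
  exact (hIoc a b).sub (hIoc b a)

theorem integral_intervalIntegral_swap_of_bounded [MeasurableSpace S] (π : Measure S)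
    [IsFiniteMeasure π] (hf : Measurable (Function.uncurry f)) (hC : ∀ t s, |f t s| ≤ C) (a b : ℝ) :
    ∫ s, (∫ t in a..b, f t s) ∂π = ∫ t in a..b, ∫ s, f t s ∂π := by
  have : IsFiniteMeasure (volume.restrict (Ι a b)) :=
    isFiniteMeasure_restrict.2 measure_Ioc_lt_top.ne
  refine (intervalIntegral_integral_swap ?_).symm
  exact Integrable.of_bound hf.aestronglyMeasurable C (ae_of_all _ fun z => hC z.1 z.2)

theorem abs_intervalIntegral_le_of_bounded (hC : ∀ t s, |f t s| ≤ C) (a b : ℝ) (s : S) :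
    |∫ t in a..b, f t s| ≤ C * |b - a| := by
  simpa using intervalIntegral.norm_integral_le_of_norm_le_const (a := a) (b := b)
    fun t _ => (by simpa using hC t s : ‖f t s‖ ≤ C)

theorem intervalIntegrable_of_bounded [MeasurableSpace S] (hf : Measurable (Function.uncurry f))
    (hC : ∀ t s, |f t s| ≤ C) (a b : ℝ) (s : S) :
    IntervalIntegrable (fun t => f t s) volume a b :=
  intervalIntegrable_const.mono_fun' hf.of_uncurry_right.aestronglyMeasurable
    (ae_of_all _ fun t => hC t s)

end Bounded

section Mechanism

variable {S : Type*} {q p : ℝ → S → ℝ} {C M : ℝ}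

theorem abs_mul_sub_le_of_bounded (hq : ∀ t s, |q t s| ≤ C) (hp : ∀ t s, |p t s| ≤ M)
    (t θ : ℝ) (s : S) : |t * q θ s - p θ s| ≤ |t| * C + M := by
  calc |t * q θ s - p θ s| ≤ |t * q θ s| + |p θ s| := abs_sub _ _
    _ ≤ |t| * C + M := by rw [abs_mul]; gcongr; exacts [hq θ s, hp θ s]

variable [MeasurableSpace S]

theorem integral_envelope_eq_zero (π : Measure S) [IsFiniteMeasure π]
    (hqm : Measurable (Function.uncurry q)) (hpm : Measurable (Function.uncurry p))
    (hq : ∀ t s, |q t s| ≤ C) (hp : ∀ t s, |p t s| ≤ M) {N : Set ℝ} (hN : N.OrdConnected)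
    (hIC : ∀ t ∈ N, ∀ θ ∈ N, ∫ s, (t * q θ s - p θ s) ∂π ≤ ∫ s, (t * q t s - p t s) ∂π)
    {a b : ℝ} (ha : a ∈ N) (hb : b ∈ N) :
    ∫ s, (b * q b s - p b s - (a * q a s - p a s) - ∫ t in a..b, q t s) ∂π = 0 := by
  set W : ℝ → ℝ := fun t => ∫ s, (t * q t s - p t s) ∂π
  set m : ℝ → ℝ := fun t => ∫ s, q t s ∂π
  have hq_int (θ : ℝ) : Integrable (q θ) π :=
    .of_bound hqm.of_uncurry_left.aestronglyMeasurable C (ae_of_all _ (hq θ))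
  have hU_int (t θ : ℝ) : Integrable (fun s => t * q θ s - p θ s) π :=
    ((hq_int θ).const_mul t).sub
      (.of_bound hpm.of_uncurry_left.aestronglyMeasurable M (ae_of_all _ (hp θ)))
  have hI_int : Integrable (fun s => ∫ t in a..b, q t s) π :=
    .of_bound (measurable_intervalIntegral_of_measurable_uncurry hqm a b).aestronglyMeasurable
      (C * |b - a|) (ae_of_all _ (abs_intervalIntegral_le_of_bounded hq a b))
  have hsubgrad : IsSubgradientOn W m N := by
    intro x hx y hy
    have hdev : ∫ s, (y * q x s - p x s) ∂π = W x + m x * (y - x) := by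
      rw [← integral_mul_const, ← integral_add (hU_int x x) ((hq_int x).mul_const _)]
      congr 1; ext s; ring
    linarith [hIC y hy x hx]
  rw [integral_sub (f := fun s => b * q b s - p b s - (a * q a s - p a s))
      ((hU_int b b).sub (hU_int a a)) hI_int, integral_sub (hU_int b b) (hU_int a a),
    integral_intervalIntegral_swap_of_bounded π hqm hq,
    (hsubgrad.mono (hN.uIcc_subset ha hb)).intervalIntegral_eq_sub, sub_self]

theorem envelope_of_fullDim
    (hqm : Measurable (Function.uncurry q)) (hpm : Measurable (Function.uncurry p))
    (hq : ∀ t s, |q t s| ≤ C) (hp : ∀ t s, |p t s| ≤ M) {N : Set ℝ} (hN : N.OrdConnected)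
    {P : Set (Measure S)} (hP : FullDim P) (hfin : ∀ π ∈ P, IsFiniteMeasure π)
    (hIC : ∀ π ∈ P, ∀ t ∈ N, ∀ θ ∈ N,
      ∫ s, (t * q θ s - p θ s) ∂π ≤ ∫ s, (t * q t s - p t s) ∂π)
    {a b : ℝ} (ha : a ∈ N) (hb : b ∈ N) (s : S) :
    b * q b s - p b s - (a * q a s - p a s) = ∫ t in a..b, q t s := by
  have hqt (t : ℝ) : Measurable (q t) := hqm.of_uncurry_left
  have hpt (t : ℝ) : Measurable (p t) := hpm.of_uncurry_left
  refine sub_eq_zero.1 (hP (fun s => b * q b s - p b s - (a * q a s - p a s) - ∫ t in a..b, q t s)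
    ?_ ⟨(|b| * C + M) + (|a| * C + M) + C * |b - a|, fun s => ?_⟩ (fun π hπ => ?_) s)
  · have := measurable_intervalIntegral_of_measurable_uncurry hqm a b
    fun_prop
  · have := abs_mul_sub_le_of_bounded hq hp b b s
    have := abs_mul_sub_le_of_bounded hq hp a a s
    have := abs_intervalIntegral_le_of_bounded hq a b s
    have := abs_sub (b * q b s - p b s - (a * q a s - p a s)) (∫ t in a..b, q t s)
    have := abs_sub (b * q b s - p b s) (a * q a s - p a s)
    linarith
  · have := hfin π hπ
    exact integral_envelope_eq_zero π hqm hpm hq hp hN (hIC π hπ) ha hb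

end Mechanism

theorem stmt_5_general
    {S : Type*} [MeasurableSpace S]
    (q p : ℝ → S → ℝ)
    (hq01 : ∀ t s, q t s ∈ Icc (0:ℝ) 1)
    (hqm : Measurable (Function.uncurry q)) (hpm : Measurable (Function.uncurry p))
    (hpb : ∃ M, ∀ t s, |p t s| ≤ M)
    (B : ℝ → Set (Measure S))
    (hBprob : ∀ t : ℝ, ∀ π ∈ B t, IsProbabilityMeasure π)
    (hover : ∀ t ∈ Icc (0:ℝ) 1, ∃ δ > 0,
      FullDim (⋂ t' ∈ Metric.ball t δ ∩ Icc (0:ℝ) 1, B t'))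
    (hric : ∀ t ∈ Icc (0:ℝ) 1, ∀ θ ∈ Icc (0:ℝ) 1, ∀ π ∈ B t,
      ∫ s, (t * q t s - p t s) ∂π ≥ ∫ s, (t * q θ s - p θ s) ∂π) :
    ∀ t' ∈ Icc (0:ℝ) 1, ∀ t'' ∈ Icc (0:ℝ) 1, ∀ s : S,
      t'' * q t'' s - p t'' s - (t' * q t' s - p t' s) = ∫ t in t'..t'', q t s := by
  obtain ⟨M, hp⟩ := hpb
  have hq (t : ℝ) (s : S) : |q t s| ≤ 1 := abs_le.2 ⟨by linarith [(hq01 t s).1], (hq01 t s).2⟩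
  intro t' ht' t'' ht''
  refine isPreconnected_Icc.induction₂
    (fun x y => ∀ s, y * q y s - p y s - (x * q x s - p x s) = ∫ t in x..y, q t s)
    (fun x hx => ?_) (fun x y z _ _ _ hxy hyz s => ?_) (fun x y _ _ hxy s => ?_) ht' ht''
  · obtain ⟨δ, hδ, hfull⟩ := hover x hx
    have hN : (Metric.ball x δ ∩ Icc (0:ℝ) 1).OrdConnected := by
      rw [Real.ball_eq_Ioo]; infer_instance
    have hxN : x ∈ Metric.ball x δ ∩ Icc (0:ℝ) 1 := ⟨Metric.mem_ball_self hδ, hx⟩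
    have hmem : ∀ π ∈ ⋂ t ∈ Metric.ball x δ ∩ Icc (0:ℝ) 1, B t,
        ∀ t ∈ Metric.ball x δ ∩ Icc (0:ℝ) 1, π ∈ B t := fun π hπ => mem_iInter₂.1 hπ
    filter_upwards [inter_mem_nhdsWithin (Icc (0:ℝ) 1) (Metric.ball_mem_nhds x hδ)] with y hy
    exact envelope_of_fullDim hqm hpm hq hp hN hfull
      (fun π hπ => have := hBprob x π (hmem π hπ x hxN); inferInstance)
      (fun π hπ t ht θ hθ => hric t ht.2 θ hθ.2 π (hmem π hπ t ht)) hxN ⟨hy.2, hy.1⟩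
  · rw [← intervalIntegral.integral_add_adjacent_intervals
      (intervalIntegrable_of_bounded hqm hq x y s) (intervalIntegrable_of_bounded hqm hq y z s),
      ← hxy s, ← hyz s]
    ring
  · rw [intervalIntegral.integral_symm, ← hxy s]
    ring

theorem stmt_5
    {S : Type*} [MeasurableSpace S] [MetricSpace S] [CompactSpace S] [BorelSpace S]
    (q p : ℝ → S → ℝ)
    (hq01 : ∀ t s, q t s ∈ Icc (0:ℝ) 1)
    (hqm : Measurable (Function.uncurry q)) (hpm : Measurable (Function.uncurry p))
    (hpb : ∃ M, ∀ t s, |p t s| ≤ M)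
    (B : ℝ → Set (Measure S))
    (hBprob : ∀ t : ℝ, ∀ π ∈ B t, IsProbabilityMeasure π)
    (hover : ∀ t ∈ Icc (0:ℝ) 1, ∃ δ > 0,
      FullDim (⋂ t' ∈ Metric.ball t δ ∩ Icc (0:ℝ) 1, B t'))
    (hric : ∀ t ∈ Icc (0:ℝ) 1, ∀ θ ∈ Icc (0:ℝ) 1, ∀ π ∈ B t,
      ∫ s, (t * q t s - p t s) ∂π ≥ ∫ s, (t * q θ s - p θ s) ∂π) :
    ∀ t' ∈ Icc (0:ℝ) 1, ∀ t'' ∈ Icc (0:ℝ) 1, ∀ s : S,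
      t'' * q t'' s - p t'' s - (t' * q t' s - p t' s) = ∫ t in t'..t'', q t s :=
  stmt_5_general q p hq01 hqm hpm hpb B hBprob hover hric
end

section
/- Suppose a mechanism (q,p) on T = [0,1] satisfies the ex post envelope condition and q is ex post monotone (t' ≥ t implies q(t',s) ≥ q(t,s) for all s). Then (q,p) is ex post incentive compatible: for all t'', t' ∈ T and all s ∈ S, t''q(t'',s) − p(t'',s) ≥ t''q(t',s) − p(t',s). -/
open MeasureTheory Set

theorem stmt_6
    {S : Type*}
    (q p : ℝ → S → ℝ)
    (hq01 : ∀ t s, q t s ∈ Icc (0:ℝ) 1)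
    (hint : ∀ s : S, ∀ t' t'' : ℝ, IntervalIntegrable (fun t => q t s) volume t' t'')
    (hmono : ∀ t ∈ Icc (0:ℝ) 1, ∀ t' ∈ Icc (0:ℝ) 1, t ≤ t' → ∀ s, q t s ≤ q t' s)
    (henv : ∀ t' ∈ Icc (0:ℝ) 1, ∀ t'' ∈ Icc (0:ℝ) 1, ∀ s : S,
      t'' * q t'' s - p t'' s - (t' * q t' s - p t' s) = ∫ t in t'..t'', q t s) :
    ∀ t'' ∈ Icc (0:ℝ) 1, ∀ t' ∈ Icc (0:ℝ) 1, ∀ s : S,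
      t'' * q t'' s - p t'' s ≥ t'' * q t' s - p t' s := by
  intro t'' h'' t' h' s
  have henv' := henv t' h' t'' h'' s
  have key : ∫ t in t'..t'', q t s ≥ (t'' - t') * q t' s := by
    rcases le_total t' t'' with h | h
    · have : ∫ t in t'..t'', (fun _ => q t' s) t ≤ ∫ t in t'..t'', q t s := by
        apply intervalIntegral.integral_mono_on h (intervalIntegrable_const) (hint s t' t'')
        intro x hx
        exact hmono t' h' x ⟨le_trans h'.1 hx.1, le_trans hx.2 h''.2⟩ hx.1 s
      simpa [mul_comm] using this
    · have : ∫ t in t''..t', q t s ≤ ∫ t in t''..t', (fun _ => q t' s) t := by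
        apply intervalIntegral.integral_mono_on h (hint s t'' t') intervalIntegrable_const
        intro x hx
        exact hmono x ⟨le_trans h''.1 hx.1, le_trans hx.2 h'.2⟩ t' h' hx.2 s
      rw [intervalIntegral.integral_symm]
      simp only [intervalIntegral.integral_const, smul_eq_mul] at this ⊢
      nlinarith
  nlinarith
end

section
/- In the general model, if the utility function u satisfies the ex post envelope condition with respect to a mechanism φ, and φ satisfies ex post monotone type sensitivity (t'' ≥ t' implies u₂(φ(t'',s),t,s) ≥ u₂(φ(t',s),t,s) for all t, s), then φ is ex post incentive compatible: u(φ(t'',s),t'',s) ≥ u(φ(t',s),t'',s) for all t', t'' ∈ T and all s ∈ S. -/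
open MeasureTheory Set

theorem stmt_9
    {S O : Type*}
    (φ : ℝ → S → O) (u u₂ : O → ℝ → S → ℝ)
    (hderiv : ∀ (o : O) (s : S) (t : ℝ), HasDerivAt (fun τ => u o τ s) (u₂ o t s) t)
    (hcont : ∀ (θ : ℝ) (s : S), Continuous (fun t : ℝ => u₂ (φ θ s) t s))
    (h2nonneg : ∀ o t s, 0 ≤ u₂ o t s)
    (h2bdd : ∃ M, ∀ o t s, |u₂ o t s| ≤ M)
    (hint : ∀ (s : S) (t' t'' : ℝ),
      IntervalIntegrable (fun t => u₂ (φ t s) t s) volume t' t'')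
    (hmts : ∀ t' ∈ Icc (0:ℝ) 1, ∀ t'' ∈ Icc (0:ℝ) 1, t' ≤ t'' →
      ∀ (t : ℝ) (s : S), u₂ (φ t' s) t s ≤ u₂ (φ t'' s) t s)
    (henv : ∀ t' ∈ Icc (0:ℝ) 1, ∀ t'' ∈ Icc (0:ℝ) 1, ∀ s : S,
      u (φ t'' s) t'' s - u (φ t' s) t' s = ∫ t in t'..t'', u₂ (φ t s) t s) :
    ∀ t' ∈ Icc (0:ℝ) 1, ∀ t'' ∈ Icc (0:ℝ) 1, ∀ s : S,
      u (φ t'' s) t'' s ≥ u (φ t' s) t'' s := by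
  intro t' ht' t'' ht'' s
  have hftc : u (φ t' s) t'' s - u (φ t' s) t' s
      = ∫ t in t'..t'', u₂ (φ t' s) t s :=
    (intervalIntegral.integral_eq_sub_of_hasDerivAt
      (fun t _ => hderiv (φ t' s) s t)
      ((hcont t' s).intervalIntegrable t' t'')).symm
  have henv' := henv t' ht' t'' ht'' s
  have key : (∫ t in t'..t'', u₂ (φ t' s) t s) ≤ ∫ t in t'..t'', u₂ (φ t s) t s := by
    rcases le_or_gt t' t'' with h | h
    · apply intervalIntegral.integral_mono_on h
        ((hcont t' s).intervalIntegrable t' t'') (hint s t' t'')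
      intro t ht
      exact hmts t' ht' t ⟨ht'.1.trans ht.1, ht.2.trans ht''.2⟩ ht.1 t s
    · rw [intervalIntegral.integral_symm t'' t', intervalIntegral.integral_symm t'' t']
      apply neg_le_neg
      apply intervalIntegral.integral_mono_on h.le (hint s t'' t')
        ((hcont t' s).intervalIntegrable t'' t')
      intro t ht
      exact hmts t ⟨ht''.1.trans ht.1, ht.2.trans ht'.2⟩ t' ht' ht.2 t s
  linarith
end

section
/- In the two-state example with S = {1,2}, ε ∈ (0, 1/6], belief sets Π(t) = {π : π₁ ∈ [1/3−2ε, 1/3−ε]} for t ≤ 1/2 and Π(t) = {π : π₁ ∈ [2/3+ε, 2/3+2ε]} for t > 1/2, and the mechanism q ≡ 1, p(t,s) = c/2 if t ≤ 1/2 and s = 1, p(t,s) = −c if t ≤ 1/2 and s = 2, p(t,s) = 0 if t > 1/2 (with c > 0): the mechanism is robust incentive compatible but not ex post incentive compatible. -/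
open Set

theorem stmt_10
    (ε c : ℝ) (hε : ε ∈ Ioc (0:ℝ) (1/6)) (hc : 0 < c)
    (q p : ℝ → Fin 2 → ℝ)
    (hq : ∀ t s, q t s = 1)
    (hp₁ : ∀ t : ℝ, t ≤ 1/2 → p t 0 = c/2 ∧ p t 1 = -c)
    (hp₂ : ∀ t : ℝ, 1/2 < t → p t 0 = 0 ∧ p t 1 = 0)
    (B : ℝ → Set (Fin 2 → ℝ))
    (hB₁ : ∀ t : ℝ, t ≤ 1/2 → B t =
      {π : Fin 2 → ℝ | 0 ≤ π 0 ∧ 0 ≤ π 1 ∧ π 0 + π 1 = 1 ∧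
        π 0 ∈ Icc (1/3 - 2*ε) (1/3 - ε)})
    (hB₂ : ∀ t : ℝ, 1/2 < t → B t =
      {π : Fin 2 → ℝ | 0 ≤ π 0 ∧ 0 ≤ π 1 ∧ π 0 + π 1 = 1 ∧
        π 0 ∈ Icc (2/3 + ε) (2/3 + 2*ε)}) :
    (∀ t ∈ Icc (0:ℝ) 1, ∀ θ ∈ Icc (0:ℝ) 1, ∀ π ∈ B t,
        π 0 * (t * q t 0 - p t 0) + π 1 * (t * q t 1 - p t 1) ≥
        π 0 * (t * q θ 0 - p θ 0) + π 1 * (t * q θ 1 - p θ 1)) ∧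
    ¬ (∀ t ∈ Icc (0:ℝ) 1, ∀ θ ∈ Icc (0:ℝ) 1, ∀ s : Fin 2,
        t * q t s - p t s ≥ t * q θ s - p θ s) := by
  obtain ⟨hε0, hε6⟩ := hε
  constructor
  · intro t ht θ hθ π hπ
    rcases le_or_gt t (1/2) with h1 | h1
    · rw [hB₁ t h1] at hπ
      obtain ⟨h0, h1', hsum, hlo, hhi⟩ := hπ
      obtain ⟨pt0, pt1⟩ := hp₁ t h1
      rcases le_or_gt θ (1/2) with h2 | h2
      · obtain ⟨pθ0, pθ1⟩ := hp₁ θ h2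
        rw [hq, hq, hq, hq, pt0, pt1, pθ0, pθ1]
      · obtain ⟨pθ0, pθ1⟩ := hp₂ θ h2
        rw [hq, hq, hq, hq, pt0, pt1, pθ0, pθ1]
        nlinarith
    · rw [hB₂ t h1] at hπ
      obtain ⟨h0, h1', hsum, hlo, hhi⟩ := hπ
      obtain ⟨pt0, pt1⟩ := hp₂ t h1
      rcases le_or_gt θ (1/2) with h2 | h2
      · obtain ⟨pθ0, pθ1⟩ := hp₁ θ h2
        rw [hq, hq, hq, hq, pt0, pt1, pθ0, pθ1]
        nlinarith
      · obtain ⟨pθ0, pθ1⟩ := hp₂ θ h2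
        rw [hq, hq, hq, hq, pt0, pt1, pθ0, pθ1]
  · intro h
    have := h 1 (by norm_num) 0 (by norm_num) 1
    rw [hq, hq, (hp₂ 1 (by norm_num)).2, (hp₁ 0 (by norm_num)).2] at this
    linarith
end

section
/- A menu of contracts {c(t) ∈ C(S) : t ∈ T} that is robust incentive compatible satisfies: for any two types t ≠ t' such that Π(t) ∩ Π(t') has full dimension, c(t) = c(t') (as functions on S). -/
open MeasureTheory Set

theorem stmt_11
    {S : Type*} [MeasurableSpace S] [MetricSpace S] [CompactSpace S] [BorelSpace S]
    (B : ℝ → Set (Measure S))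
    (hBprob : ∀ t : ℝ, ∀ π ∈ B t, IsProbabilityMeasure π)
    (v : ℝ → ℝ) (c : ℝ → C(S, ℝ))
    (hic : ∀ t ∈ Icc (0:ℝ) 1, ∀ t' ∈ Icc (0:ℝ) 1, t' ≠ t → ∀ π ∈ B t,
      v t - ∫ s, c t s ∂π ≥ v t - ∫ s, c t' s ∂π)
    (t t' : ℝ) (ht : t ∈ Icc (0:ℝ) 1) (ht' : t' ∈ Icc (0:ℝ) 1) (hne : t ≠ t')
    (hfd : FullDim (B t ∩ B t')) :
    c t = c t' := by
  set g : C(S, ℝ) := c t - c t' with hg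
  have hmeas : Measurable (g : S → ℝ) := g.continuous.measurable
  have hbd : ∃ M, ∀ s, |(g : S → ℝ) s| ≤ M := by
    refine ⟨‖BoundedContinuousFunction.mkOfCompact g‖, fun s => ?_⟩
    simpa using (BoundedContinuousFunction.mkOfCompact g).norm_coe_le_norm s
  have hzero : ∀ π ∈ B t ∩ B t', ∫ s, (g : S → ℝ) s ∂π = 0 := by
    rintro π ⟨hπt, hπt'⟩
    have hint : ∀ u : ℝ, Integrable (fun s => c u s) π := by
      intro u
      haveI := hBprob t π hπt
      exact (BoundedContinuousFunction.mkOfCompact (c u)).integrable π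
    have h1 := hic t ht t' ht' (Ne.symm hne) π hπt
    have h2 := hic t' ht' t ht hne π hπt'
    have h1' : ∫ s, c t' s ∂π ≥ ∫ s, c t s ∂π := by linarith
    have h2' : ∫ s, c t s ∂π ≥ ∫ s, c t' s ∂π := by linarith
    have heq : ∫ s, c t s ∂π = ∫ s, c t' s ∂π := le_antisymm h1' h2'
    have : ∫ s, (c t s - c t' s) ∂π = 0 := by
      rw [integral_sub (hint t) (hint t'), heq, sub_self]
    simpa [hg] using this
  ext s
  have := hfd (g : S → ℝ) hmeas hbd hzero s
  have : c t s - c t' s = 0 := by simpa [hg] using this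
  linarith
end

section
/- If beliefs {Π(t) : t ∈ [0,1]} are fully overlapping (each t has a neighborhood N(t) with ⋂_{t'∈N(t)} Π(t') of full dimension), then any robust incentive compatible menu {c(t) ∈ C(S) : t ∈ [0,1]} is constant: c(t) = c(t') for all t, t' ∈ [0,1]. -/
open MeasureTheory Set

theorem stmt_12
    {S : Type*} [MeasurableSpace S] [MetricSpace S] [CompactSpace S] [BorelSpace S]
    (B : ℝ → Set (Measure S))
    (hBprob : ∀ t : ℝ, ∀ π ∈ B t, IsProbabilityMeasure π)
    (hover : ∀ t ∈ Icc (0:ℝ) 1, ∃ δ > 0,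
      FullDim (⋂ t' ∈ Metric.ball t δ ∩ Icc (0:ℝ) 1, B t'))
    (c : ℝ → C(S, ℝ))
    (hic : ∀ t ∈ Icc (0:ℝ) 1, ∀ t' ∈ Icc (0:ℝ) 1, t' ≠ t → ∀ π ∈ B t,
      ∫ s, c t s ∂π ≤ ∫ s, c t' s ∂π) :
    ∀ t ∈ Icc (0:ℝ) 1, ∀ t' ∈ Icc (0:ℝ) 1, c t = c t' := by
  -- Step 1: local constancy
  have key : ∀ x ∈ Icc (0:ℝ) 1, ∃ δ > 0,
      ∀ w ∈ Metric.ball x δ ∩ Icc (0:ℝ) 1, c w = c x := by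
    intro x hx
    obtain ⟨δ, hδ, hfd⟩ := hover x hx
    refine ⟨δ, hδ, fun w hw => ?_⟩
    rcases eq_or_ne w x with rfl | hne
    · rfl
    have hxball : x ∈ Metric.ball x δ ∩ Icc (0:ℝ) 1 := ⟨Metric.mem_ball_self hδ, hx⟩
    set g : S → ℝ := fun s => c x s - c w s with hg
    have hgc : Continuous g := (c x).continuous.sub (c w).continuous
    have hint : ∀ π ∈ (⋂ t' ∈ Metric.ball x δ ∩ Icc (0:ℝ) 1, B t'), ∫ s, g s ∂π = 0 := by
      intro π hπ
      have hπx : π ∈ B x := mem_iInter₂.mp hπ x hxball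
      have hπw : π ∈ B w := mem_iInter₂.mp hπ w hw
      haveI : IsProbabilityMeasure π := hBprob x π hπx
      have h1 := hic x hx w hw.2 hne π hπx
      have h2 := hic w hw.2 x hx hne.symm π hπw
      have i1 : Integrable (fun s => c x s) π := (c x).continuous.integrable_of_hasCompactSupport (HasCompactSupport.of_compactSpace _)
      have i2 : Integrable (fun s => c w s) π := (c w).continuous.integrable_of_hasCompactSupport (HasCompactSupport.of_compactSpace _)
      have : ∫ s, g s ∂π = (∫ s, c x s ∂π) - ∫ s, c w s ∂π := integral_sub i1 i2
      rw [this]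
      linarith
    have hbd : ∃ M, ∀ s, |g s| ≤ M := by
      rcases isEmpty_or_nonempty S with hS | hS
      · exact ⟨0, fun s => (IsEmpty.false s).elim⟩
      · obtain ⟨s0, -, hs0⟩ := isCompact_univ.exists_isMaxOn univ_nonempty
          (continuous_abs.comp hgc).continuousOn
        exact ⟨|g s0|, fun s => hs0 (mem_univ s)⟩
    have hz := hfd g hgc.measurable hbd hint
    ext s
    have := hz s
    simp only [hg] at this
    linarith
  -- choose the radii
  choose δ hδpos hδ using key
  intro t ht t' ht'
  by_contra hne
  -- open sets
  set U : Set ℝ := ⋃ x : {x // x ∈ Icc (0:ℝ) 1 ∧ c x = c t}, Metric.ball x.1 (δ x.1 x.2.1) with hU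
  set V : Set ℝ := ⋃ x : {x // x ∈ Icc (0:ℝ) 1 ∧ c x ≠ c t}, Metric.ball x.1 (δ x.1 x.2.1) with hV
  have hUopen : IsOpen U := isOpen_iUnion fun _ => Metric.isOpen_ball
  have hVopen : IsOpen V := isOpen_iUnion fun _ => Metric.isOpen_ball
  have hsub : Icc (0:ℝ) 1 ⊆ U ∪ V := by
    intro x hx
    by_cases h : c x = c t
    · exact Or.inl (mem_iUnion.mpr ⟨⟨x, hx, h⟩, Metric.mem_ball_self (hδpos x hx)⟩)
    · exact Or.inr (mem_iUnion.mpr ⟨⟨x, hx, h⟩, Metric.mem_ball_self (hδpos x hx)⟩)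
  have htU : t ∈ Icc (0:ℝ) 1 ∩ U :=
    ⟨ht, mem_iUnion.mpr ⟨⟨t, ht, rfl⟩, Metric.mem_ball_self (hδpos t ht)⟩⟩
  have ht'V : t' ∈ Icc (0:ℝ) 1 ∩ V :=
    ⟨ht', mem_iUnion.mpr ⟨⟨t', ht', fun h => hne h.symm⟩, Metric.mem_ball_self (hδpos t' ht')⟩⟩
  obtain ⟨w, hwI, hwU, hwV⟩ :=
    isPreconnected_Icc U V hUopen hVopen hsub ⟨t, htU⟩ ⟨t', ht'V⟩
  obtain ⟨⟨x, hx, hcx⟩, hwx⟩ := mem_iUnion.mp hwU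
  obtain ⟨⟨y, hy, hcy⟩, hwy⟩ := mem_iUnion.mp hwV
  have e1 : c w = c x := hδ x hx w ⟨hwx, hwI⟩
  have e2 : c w = c y := hδ y hy w ⟨hwy, hwI⟩
  exact hcy (by rw [← e2, e1, hcx])
end

section
/- Suppose each Π(t) ⊆ Δ(S) is convex and norm compact and the correspondence t ↦ Π(t) is norm continuous on compact T. If c ∈ C(T × S) satisfies weak full extraction for v : T → ℝ continuous on the connected compact metric space T (with every type the limit of other types), then c satisfies full extraction: for every t ∈ T and every π ∈ Π(t), v(t) = ∫ c(t,s) dπ. -/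
open MeasureTheory Set

/-- Total variation distance between two measures (encoded as the supremum over measurable
sets of the difference of the measures). -/
noncomputable def tvDist {S : Type*} [MeasurableSpace S]
    (π ρ : MeasureTheory.Measure S) : ℝ :=
  ⨆ A : {A : Set S // MeasurableSet A}, |(π A.1).toReal - (ρ A.1).toReal|

theorem stmt_13
    {T : Type*} [MetricSpace T] [CompactSpace T] [ConnectedSpace T]
    {S : Type*} [MeasurableSpace S] [MetricSpace S] [CompactSpace S] [BorelSpace S]
    (hacc : ∀ t : T, t ∈ closure ({t}ᶜ))
    (B : T → Set (Measure S))
    (hBprob : ∀ t : T, ∀ π ∈ B t, IsProbabilityMeasure π)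
    (hconv : ∀ t : T, ∀ π ∈ B t, ∀ ρ ∈ B t, ∀ a ∈ Icc (0:ℝ) 1,
      ENNReal.ofReal a • π + ENNReal.ofReal (1 - a) • ρ ∈ B t)
    (hcomp : ∀ t : T, ∀ f : ℕ → Measure S, (∀ n, f n ∈ B t) →
      ∃ ρ ∈ B t, ∃ φ : ℕ → ℕ, StrictMono φ ∧
        Filter.Tendsto (fun n => tvDist (f (φ n)) ρ) Filter.atTop (nhds 0))
    (hcontB : ∀ t : T, ∀ δ > (0:ℝ), ∃ η > (0:ℝ), ∀ t' : T, dist t t' < η →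
      (∀ π ∈ B t, ∃ π' ∈ B t', tvDist π π' < δ) ∧
      (∀ π' ∈ B t', ∃ π ∈ B t, tvDist π π' < δ))
    (v : T → ℝ) (hv : Continuous v)
    (c : C(T × S, ℝ))
    (hwfe1 : ∀ t : T, ∀ π ∈ B t, 0 ≤ v t - ∫ s, c (t, s) ∂π)
    (hwfe2 : ∀ t t' : T, t' ≠ t → ∀ π ∈ B t, v t - ∫ s, c (t', s) ∂π ≤ 0) :
    ∀ t : T, ∀ π ∈ B t, v t = ∫ s, c (t, s) ∂π := by
  intro t π hπ
  have hprob := hBprob t π hπ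
  obtain ⟨u, hu_mem, hu_lim⟩ := mem_closure_iff_seq_limit.1 (hacc t)
  have hconvInt : Filter.Tendsto (fun n => ∫ s, c (u n, s) ∂π) Filter.atTop
      (nhds (∫ s, c (t, s) ∂π)) := by
    apply MeasureTheory.tendsto_integral_of_dominated_convergence (fun _ => ‖c‖)
    · intro n
      exact (c.continuous.comp (Continuous.prodMk_right (u n))).aestronglyMeasurable
    · exact MeasureTheory.integrable_const _
    · intro n
      exact Filter.Eventually.of_forall fun s => c.norm_coe_le_norm (u n, s)
    · refine Filter.Eventually.of_forall fun s => ?_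
      have hc : Continuous fun t' : T => c (t', s) :=
        c.continuous.comp (continuous_id.prodMk continuous_const)
      exact (hc.tendsto t).comp hu_lim
  have hle : v t ≤ ∫ s, c (t, s) ∂π := by
    have h1 : ∀ n, v t ≤ ∫ s, c (u n, s) ∂π := fun n => by
      have := hwfe2 t (u n) (hu_mem n) π hπ
      linarith
    exact le_of_tendsto_of_tendsto tendsto_const_nhds hconvInt
      (Filter.Eventually.of_forall h1)
  have hge := hwfe1 t π hπ
  linarith
end

section
/- Suppose virtual extraction holds with belief sets Π(t) norm compact convex and Π norm continuous on compact T. Then virtual extraction can be achieved with a finite menu: for every continuous v : T → ℝ and every ε > 0 there exist finitely many contracts c₁, …, c_n ∈ C(S) such that for each t ∈ T there is an index i with 0 ≤ v(t) − ∫c_i dπ ≤ 2ε for all π ∈ Π(t), and for every j, v(t) − ∫c_j dπ ≤ 2ε for all π ∈ Π(t). -/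
open MeasureTheory Set

/-!
Sample the contract `c` given by virtual extraction at finitely many types `tᵢ` such that every
section `c(t, ·)` is within `ε` in sup norm of some `c(tᵢ, ·)`; they exist because `t ↦ c(t, ·)`
is continuous on the compact space `T`. For such a `tᵢ` the payoff `v t - ∫ c(tᵢ, ·) dπ` is
within `ε` of `v t - ∫ c(t, ·) dπ ∈ [0, ε]`, and for every `tᵢ` it is at most `ε` by the second
clause of virtual extraction. Lowering each sampled contract by `ε` therefore puts the first
payoff into `[0, 2ε]` and all others below `2ε`.
-/

theorem exists_fin_forall_dist_lt {X Y : Type*} [TopologicalSpace X] [CompactSpace X]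
    [PseudoMetricSpace Y] {g : X → Y} (hg : Continuous g) {ε : ℝ} (hε : 0 < ε) :
    ∃ (n : ℕ) (p : Fin n → X), ∀ x, ∃ i, dist (g x) (g (p i)) < ε := by
  obtain ⟨F, hF⟩ := CompactSpace.elim_nhds_subcover (fun x₀ => g ⁻¹' Metric.ball (g x₀) ε)
    fun x₀ => (Metric.isOpen_ball.preimage hg).mem_nhds (Metric.mem_ball_self hε)
  refine ⟨F.card, fun i => F.equivFin.symm i, fun x => ?_⟩
  have hx : x ∈ ⋃ x₀ ∈ F, g ⁻¹' Metric.ball (g x₀) ε := hF ▸ mem_univ x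
  obtain ⟨x₀, hx₀F, hx⟩ := mem_iUnion₂.1 hx
  exact ⟨F.equivFin ⟨x₀, hx₀F⟩, by simpa using hx⟩

section ProbabilityMeasure

variable {S : Type*} [MeasurableSpace S] {μ : Measure S} [IsProbabilityMeasure μ]

theorem abs_integral_le_of_forall_abs_le {f : S → ℝ} {C : ℝ} (h : ∀ s, |f s| ≤ C) :
    |∫ s, f s ∂μ| ≤ C := by
  simpa using norm_integral_le_of_norm_le_const (μ := μ) (f := f) (.of_forall h)

variable [TopologicalSpace S] [CompactSpace S] [OpensMeasurableSpace S]

theorem ContinuousMap.integrable_of_compactSpace (f : C(S, ℝ)) : Integrable f μ :=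
  f.continuous.integrable_of_hasCompactSupport (.of_compactSpace _)

theorem ContinuousMap.abs_integral_sub_le_dist (f g : C(S, ℝ)) :
    |∫ s, f s ∂μ - ∫ s, g s ∂μ| ≤ dist f g := by
  rw [← integral_sub f.integrable_of_compactSpace g.integrable_of_compactSpace]
  exact abs_integral_le_of_forall_abs_le fun s => by
    simpa only [Real.dist_eq] using ContinuousMap.dist_apply_le_dist (f := f) (g := g) s

theorem ContinuousMap.integral_sub_const (f : C(S, ℝ)) (a : ℝ) :
    ∫ s, (f - ContinuousMap.const S a) s ∂μ = ∫ s, f s ∂μ - a := by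
  simp only [ContinuousMap.sub_apply, ContinuousMap.const_apply]
  rw [integral_sub f.integrable_of_compactSpace (integrable_const a)]
  simp

end ProbabilityMeasure

theorem sub_integral_le_of_sSup_le {T S : Type*} [MeasurableSpace S] [TopologicalSpace S]
    [CompactSpace S] [TopologicalSpace T] [CompactSpace T] (c : C(T × S, ℝ)) {π : Measure S}
    [IsProbabilityMeasure π] {a ε : ℝ}
    (h : sSup {x : ℝ | ∃ t' : T, x = a - ∫ s, c (t', s) ∂π} ≤ ε) (t' : T) :
    a - ∫ s, c (t', s) ∂π ≤ ε := by
  have hbdd : BddAbove {x : ℝ | ∃ t' : T, x = a - ∫ s, c (t', s) ∂π} := by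
    refine ⟨a + ‖c‖, ?_⟩
    rintro _ ⟨t'', rfl⟩
    have := abs_integral_le_of_forall_abs_le (μ := π) fun s => c.norm_coe_le_norm (t'', s)
    linarith [neg_abs_le (∫ s, c (t'', s) ∂π)]
  exact (le_csSup hbdd ⟨t', rfl⟩).trans h

theorem stmt_17_general
    {T : Type*} [MetricSpace T] [CompactSpace T]
    {S : Type*} [MeasurableSpace S] [MetricSpace S] [CompactSpace S] [BorelSpace S]
    (B : T → Set (Measure S))
    (hBprob : ∀ t : T, ∀ π ∈ B t, IsProbabilityMeasure π)
    (hve : ∀ v : C(T, ℝ), ∀ ε > (0:ℝ), ∃ c : C(T × S, ℝ), ∀ t : T, ∀ π ∈ B t,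
      (0 ≤ v t - ∫ s, c (t, s) ∂π ∧ v t - ∫ s, c (t, s) ∂π ≤ ε) ∧
      (0 ≤ sSup {x : ℝ | ∃ t' : T, x = v t - ∫ s, c (t', s) ∂π} ∧
        sSup {x : ℝ | ∃ t' : T, x = v t - ∫ s, c (t', s) ∂π} ≤ ε)) :
    ∀ v : C(T, ℝ), ∀ ε > (0:ℝ), ∃ (n : ℕ) (cs : Fin n → C(S, ℝ)), ∀ t : T,
      (∃ i : Fin n, ∀ π ∈ B t,
        0 ≤ v t - ∫ s, cs i s ∂π ∧ v t - ∫ s, cs i s ∂π ≤ 2 * ε) ∧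
      (∀ j : Fin n, ∀ π ∈ B t, v t - ∫ s, cs j s ∂π ≤ 2 * ε) := by
  intro v ε hε
  obtain ⟨c, hc⟩ := hve v ε hε
  obtain ⟨n, p, hp⟩ := exists_fin_forall_dist_lt c.curry.continuous hε
  refine ⟨n, fun i => c.curry (p i) - .const S ε, fun t => ?_⟩
  have hmenu : ∀ π ∈ B t, ∀ j, ∫ s, (c.curry (p j) - .const S ε) s ∂π
      = ∫ s, c (p j, s) ∂π - ε := fun π hπ j => by
    have := hBprob t π hπ
    simpa only [ContinuousMap.curry_apply] using (c.curry (p j)).integral_sub_const ε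
  have hup : ∀ π ∈ B t, ∀ t', v t - ∫ s, c (t', s) ∂π ≤ ε := fun π hπ =>
    have := hBprob t π hπ
    sub_integral_le_of_sSup_le c (hc t π hπ).2.2
  obtain ⟨i, hi⟩ := hp t
  refine ⟨⟨i, fun π hπ => ?_⟩, fun j π hπ => ?_⟩
  · have := hBprob t π hπ
    have hclose := (c.curry t).abs_integral_sub_le_dist (μ := π) (c.curry (p i))
    simp only [ContinuousMap.curry_apply] at hclose
    have hlow := (hc t π hπ).1.1
    rw [hmenu π hπ i]
    constructor <;> linarith [abs_le.1 (hclose.trans hi.le), hup π hπ (p i)]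
  · rw [hmenu π hπ j]
    linarith [hup π hπ (p j)]

theorem stmt_17
    {T : Type*} [MetricSpace T] [CompactSpace T]
    {S : Type*} [MeasurableSpace S] [MetricSpace S] [CompactSpace S] [BorelSpace S]
    (B : T → Set (Measure S))
    (hBprob : ∀ t : T, ∀ π ∈ B t, IsProbabilityMeasure π)
    (hconv : ∀ t : T, ∀ π ∈ B t, ∀ ρ ∈ B t, ∀ a ∈ Icc (0:ℝ) 1,
      ENNReal.ofReal a • π + ENNReal.ofReal (1 - a) • ρ ∈ B t)
    (hcomp : ∀ t : T, ∀ f : ℕ → Measure S, (∀ n, f n ∈ B t) →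
      ∃ ρ ∈ B t, ∃ φ : ℕ → ℕ, StrictMono φ ∧
        Filter.Tendsto (fun n => tvDist (f (φ n)) ρ) Filter.atTop (nhds 0))
    (hcontB : ∀ t : T, ∀ δ > (0:ℝ), ∃ η > (0:ℝ), ∀ t' : T, dist t t' < η →
      (∀ π ∈ B t, ∃ π' ∈ B t', tvDist π π' < δ) ∧
      (∀ π' ∈ B t', ∃ π ∈ B t, tvDist π π' < δ))
    (hve : ∀ v : C(T, ℝ), ∀ ε > (0:ℝ), ∃ c : C(T × S, ℝ), ∀ t : T, ∀ π ∈ B t,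
      (0 ≤ v t - ∫ s, c (t, s) ∂π ∧ v t - ∫ s, c (t, s) ∂π ≤ ε) ∧
      (0 ≤ sSup {x : ℝ | ∃ t' : T, x = v t - ∫ s, c (t', s) ∂π} ∧
        sSup {x : ℝ | ∃ t' : T, x = v t - ∫ s, c (t', s) ∂π} ≤ ε)) :
    ∀ v : C(T, ℝ), ∀ ε > (0:ℝ), ∃ (n : ℕ) (cs : Fin n → C(S, ℝ)), ∀ t : T,
      (∃ i : Fin n, ∀ π ∈ B t,
        0 ≤ v t - ∫ s, cs i s ∂π ∧ v t - ∫ s, cs i s ∂π ≤ 2 * ε) ∧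
      (∀ j : Fin n, ∀ π ∈ B t, v t - ∫ s, cs j s ∂π ≤ 2 * ε) :=
  stmt_17_general B hBprob hve
end

section
/- Suppose S is finite, each Π(t) ⊆ Δ(S) is closed, beliefs are fully overlapping, and t₁ minimizes v over T. If the designer's belief π_d lies in Π(t₁), then the constant (deterministic) contract equal to v(t₁) maximizes the designer's expected revenue over all menus {c(t) ∈ C(S) : t ∈ T} satisfying robust incentive compatibility and robust individual rationality, and the revenue of any such menu is at most v(t₁). -/
open Set

theorem stmt_18
    {S : Type*} [Fintype S]
    (B : ℝ → Set (S → ℝ))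
    (hBsub : ∀ t, B t ⊆ stdSimplex ℝ S)
    (hBclosed : ∀ t, IsClosed (B t))
    (hover : ∀ t ∈ Icc (0:ℝ) 1, ∃ δ > 0,
      FullDimFin (⋂ t' ∈ Metric.ball t δ ∩ Icc (0:ℝ) 1, B t'))
    (v : ℝ → ℝ) (hv : ContinuousOn v (Icc (0:ℝ) 1))
    (t₁ : ℝ) (ht₁ : t₁ ∈ Icc (0:ℝ) 1) (hmin : ∀ t ∈ Icc (0:ℝ) 1, v t₁ ≤ v t)
    (πd : S → ℝ) (hπd : πd ∈ B t₁) :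
    (∀ c : ℝ → S → ℝ,
      (∀ t ∈ Icc (0:ℝ) 1, ∀ t' ∈ Icc (0:ℝ) 1, ∀ π ∈ B t,
        ∑ s, π s * c t s ≤ ∑ s, π s * c t' s) →
      (∀ t ∈ Icc (0:ℝ) 1, ∀ π ∈ B t, 0 ≤ v t - ∑ s, π s * c t s) →
      ∀ t ∈ Icc (0:ℝ) 1, ∑ s, πd s * c t s ≤ v t₁) ∧
    ((∀ t ∈ Icc (0:ℝ) 1, ∀ t' ∈ Icc (0:ℝ) 1, ∀ π ∈ B t,
        ∑ s, π s * (v t₁) ≤ ∑ s, π s * (v t₁)) ∧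
      (∀ t ∈ Icc (0:ℝ) 1, ∀ π ∈ B t, 0 ≤ v t - ∑ s, π s * (v t₁)) ∧
      ∑ s, πd s * (v t₁) = v t₁) := by
  have hsum : ∀ π ∈ B t₁, ∑ s, π s = 1 := fun π hπ => (hBsub t₁ hπ).2
  constructor
  · intro c hIC hIR
    -- local constancy
    have key : ∀ t, ∃ δ > 0, t ∈ Icc (0:ℝ) 1 →
        ∀ t' ∈ Metric.ball t δ ∩ Icc (0:ℝ) 1, c t' = c t := by
      intro t
      by_cases ht : t ∈ Icc (0:ℝ) 1
      · obtain ⟨δ, hδpos, hfd⟩ := hover t ht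
        refine ⟨δ, hδpos, fun _ t' ht' => ?_⟩
        have htb : t ∈ Metric.ball t δ ∩ Icc (0:ℝ) 1 :=
          ⟨Metric.mem_ball_self hδpos, ht⟩
        have := hfd (fun s => c t' s - c t s) ?_
        · funext s
          have := congrFun this s
          simpa using sub_eq_zero.mp this
        · intro π hπ
          have hπt' : π ∈ B t' := by
            have := mem_iInter₂.mp hπ t' ht'; exact this
          have hπt : π ∈ B t := by
            have := mem_iInter₂.mp hπ t htb; exact this
          have h1 := hIC t' ht'.2 t ht π hπt'
          have h2 := hIC t ht t' ht'.2 π hπt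
          have heq : ∑ s, π s * c t' s = ∑ s, π s * c t s := le_antisymm h1 h2
          have : ∑ s, (c t' s - c t s) * π s
              = ∑ s, π s * c t' s - ∑ s, π s * c t s := by
            rw [← Finset.sum_sub_distrib]; congr 1; ext s; ring
          rw [this, heq, sub_self]
      · exact ⟨1, one_pos, fun h => absurd h ht⟩
    choose δ hδpos hδ using key
    -- global constancy on Icc via connectedness
    have hconst : ∀ t ∈ Icc (0:ℝ) 1, c t = c t₁ := by
      by_contra hne
      push_neg at hne
      obtain ⟨b, hb, hbne⟩ := hne
      set u : Set ℝ := ⋃ t ∈ {t | t ∈ Icc (0:ℝ) 1 ∧ c t = c t₁}, Metric.ball t (δ t)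
      set w : Set ℝ := ⋃ t ∈ {t | t ∈ Icc (0:ℝ) 1 ∧ c t ≠ c t₁}, Metric.ball t (δ t)
      have hu : IsOpen u := isOpen_biUnion fun _ _ => Metric.isOpen_ball
      have hw : IsOpen w := isOpen_biUnion fun _ _ => Metric.isOpen_ball
      have hcover : Icc (0:ℝ) 1 ⊆ u ∪ w := by
        intro t ht
        by_cases h : c t = c t₁
        · exact Or.inl (mem_biUnion ⟨ht, h⟩ (Metric.mem_ball_self (hδpos t)))
        · exact Or.inr (mem_biUnion ⟨ht, h⟩ (Metric.mem_ball_self (hδpos t)))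
      have hune : (Icc (0:ℝ) 1 ∩ u).Nonempty :=
        ⟨t₁, ht₁, mem_biUnion ⟨ht₁, rfl⟩ (Metric.mem_ball_self (hδpos t₁))⟩
      have hwne : (Icc (0:ℝ) 1 ∩ w).Nonempty :=
        ⟨b, hb, mem_biUnion ⟨hb, hbne⟩ (Metric.mem_ball_self (hδpos b))⟩
      obtain ⟨x, hx, hxu, hxw⟩ := isPreconnected_Icc u w hu hw hcover hune hwne
      obtain ⟨a, ⟨ha, hca⟩, hxa⟩ := mem_iUnion₂.mp hxu
      obtain ⟨e, ⟨he, hce⟩, hxe⟩ := mem_iUnion₂.mp hxw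
      have h1 : c x = c a := hδ a ha x ⟨hxa, hx⟩
      have h2 : c x = c e := hδ e he x ⟨hxe, hx⟩
      exact hce (h2 ▸ h1 ▸ hca)
    intro t ht
    have hIR1 := hIR t₁ ht₁ πd hπd
    rw [hconst t ht]
    linarith
  · refine ⟨fun t _ t' _ π _ => le_refl _, fun t ht π hπ => ?_, ?_⟩
    · have h1 : ∑ s, π s * v t₁ = v t₁ := by
        rw [← Finset.sum_mul, (hBsub t hπ).2, one_mul]
      rw [h1]
      linarith [hmin t ht]
    · rw [← Finset.sum_mul, hsum πd hπd, one_mul]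
end
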